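/- arXiv:0712.3484 — 5 statements merged into one kernel-verified Lean document; each statement's English description precedes it below -/
import Mathlib

section
/- Let N be a Stein fillable closed manifold of dimension 2n−1 ≥ 5, i.e., N is diffeomorphic to the boundary of a compact Stein manifold of complex dimension n (which has the homotopy type of a CW-complex of dimension at most n). If i₁,...,i_k ∈ {1,...,n−2} satisfy i₁+⋯+i_k ≥ n+1, then the cup product map H^{i₁}(N;R) ⊗ ⋯ ⊗ H^{i_k}(N;R) → H^{i₁+⋯+i_k}(N;R) vanishes identically for any commutative ring R. -/
/-!
The coboundary of a class of degree `i ≤ n - 2` on `N = ∂W` lies in `H^{i+1}(W, N)`, which by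
Poincaré–Lefschetz duality is `H_{2n-i-1}(W) = 0` since `2n - i - 1 > n`. Hence such classes are
restrictions of classes on `W`, and so is their cup product; but `H^j(W) = 0` for `j > n`.
-/

section BoundaryCupProduct

variable {R : Type*} [CommRing R] {HW HN : Type*} [Ring HW] [Ring HN] [Algebra R HW] [Algebra R HN]
  {𝒲 : ℕ → Submodule R HW} [SetLike.GradedMonoid 𝒲]

theorem list_prod_ofFn_map_eq_zero_of_graded_eq_bot (b : HW →ₐ[R] HN) {k : ℕ} (i : Fin k → ℕ)
    (w : Fin k → HW) (hw : ∀ l, w l ∈ 𝒲 (i l)) (hbot : 𝒲 (∑ l, i l) = ⊥) :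
    (List.ofFn fun l => b (w l)).prod = 0 := by
  have hmem : (List.ofFn w).prod ∈ 𝒲 (∑ l, i l) := by
    rw [← List.sum_ofFn]
    exact SetLike.list_prod_ofFn_mem_graded i w hw
  rw [hbot, Submodule.mem_bot] at hmem
  rw [show (fun l => b (w l)) = b ∘ w from rfl, ← List.map_ofFn, ← map_list_prod, hmem, map_zero]

/-- Here `W` is a compact manifold of dimension `m` with the homotopy type of an `h`-dimensional
CW-complex, and `N = ∂W`. -/
theorem list_prod_ofFn_eq_zero_of_boundary {𝒩 : ℕ → Submodule R HN} (m h : ℕ) (b : HW →ₐ[R] HN)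
    {Hrel Hlow : ℕ → Type*} [∀ j, AddCommGroup (Hrel j)] [∀ j, Module R (Hrel j)]
    [∀ j, AddCommGroup (Hlow j)] [∀ j, Module R (Hlow j)]
    (δ : ∀ j, 𝒩 j →ₗ[R] Hrel (j + 1))
    (hexact : ∀ j (y : 𝒩 j), δ j y = 0 → ∃ x ∈ 𝒲 j, b x = (y : HN))
    (duality : ∀ j, Hrel (j + 1) ≃ₗ[R] Hlow (m - j - 1))
    (hHlow : ∀ j, h + 1 ≤ j → Subsingleton (Hlow j)) (hcohW : ∀ j, h + 1 ≤ j → 𝒲 j = ⊥)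
    {k : ℕ} (i : Fin k → ℕ) (hi : ∀ l, i l + h + 2 ≤ m) (hsum : h + 1 ≤ ∑ l, i l)
    (x : Fin k → HN) (hx : ∀ l, x l ∈ 𝒩 (i l)) :
    (List.ofFn x).prod = 0 := by
  have hlift : ∀ l, ∃ w ∈ 𝒲 (i l), b w = x l := fun l => by
    have : Subsingleton (Hlow (m - i l - 1)) := hHlow _ (by have := hi l; omega)
    have : Subsingleton (Hrel (i l + 1)) := (duality (i l)).toEquiv.subsingleton
    exact hexact (i l) ⟨x l, hx l⟩ (Subsingleton.elim _ _)
  choose w hw hbw using hlift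
  obtain rfl : (fun l => b (w l)) = x := funext hbw
  exact list_prod_ofFn_map_eq_zero_of_graded_eq_bot b i w hw (hcohW _ hsum)

end BoundaryCupProduct

theorem statement2_general
    (R : Type) [CommRing R] (n : ℕ) (hn : 3 ≤ n)
    (HW HN : Type) [Ring HW] [Ring HN] [Algebra R HW] [Algebra R HN]
    (𝒲 : ℕ → Submodule R HW) (𝒩 : ℕ → Submodule R HN)
    [GradedAlgebra 𝒲]
    (b : HW →ₐ[R] HN)
    (Hrel : ℕ → Type) [∀ j, AddCommGroup (Hrel j)] [∀ j, Module R (Hrel j)]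
    (Hlow : ℕ → Type) [∀ j, AddCommGroup (Hlow j)] [∀ j, Module R (Hlow j)]
    (δ : ∀ j, (𝒩 j) →ₗ[R] Hrel (j + 1))
    (hexact : ∀ j (y : 𝒩 j), δ j y = 0 → ∃ x ∈ 𝒲 j, b x = (y : HN))
    (duality : ∀ j, Hrel (j + 1) ≃ₗ[R] Hlow (2 * n - j - 1))
    -- W is a Stein manifold of complex dimension n: homotopically of dimension ≤ n
    (hHlow : ∀ j, n + 1 ≤ j → Subsingleton (Hlow j))
    (hcohW : ∀ j, n + 1 ≤ j → 𝒲 j = ⊥)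
    (k : ℕ) (i : Fin k → ℕ)
    (hiu : ∀ l, i l ≤ n - 2)
    (hsum : n + 1 ≤ ∑ l, i l)
    (x : Fin k → HN) (hx : ∀ l, x l ∈ 𝒩 (i l)) :
    (List.ofFn x).prod = 0 :=
  list_prod_ofFn_eq_zero_of_boundary (2 * n) n b δ hexact duality hHlow hcohW i
    (fun l => by have := hiu l; omega) hsum x hx

/-- Let `N` be a Stein fillable closed manifold of dimension `2n-1 ≥ 5`: `N` is diffeomorphic to
the boundary of a compact Stein manifold `W` of complex dimension `n`, which (by Milnor's
theorem) has the homotopy type of a CW-complex of dimension at most `n`.  We encode the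
situation as in the general boundary theorem, with `m = 2n` and homotopical dimension `h = n`:
graded cohomology `R`-algebras of `W` and `N`, the degree-preserving restriction map `b`,
relative cohomology `Hrel j = H^j(W,N;R)` with exactness of `H^j(W) → H^j(N) → H^{j+1}(W,N)`,
Poincaré–Lefschetz duality `H^{j+1}(W,N;R) ≃ H_{2n-j-1}(W;R)`, and vanishing of the homology
and cohomology of `W` above degree `n`.
Conclusion: if `i₁,…,i_k ∈ {1,…,n-2}` satisfy `i₁+⋯+i_k ≥ n+1`, then the cup product map
`H^{i₁}(N;R) ⊗ ⋯ ⊗ H^{i_k}(N;R) → H^{i₁+⋯+i_k}(N;R)` vanishes identically. -/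
theorem statement2
    (R : Type) [CommRing R] (n : ℕ) (hn : 3 ≤ n)
    (HW HN : Type) [Ring HW] [Ring HN] [Algebra R HW] [Algebra R HN]
    (𝒲 : ℕ → Submodule R HW) (𝒩 : ℕ → Submodule R HN)
    [GradedAlgebra 𝒲] [GradedAlgebra 𝒩]
    (b : HW →ₐ[R] HN)
    (hb : ∀ j, ∀ x ∈ 𝒲 j, b x ∈ 𝒩 j)
    (Hrel : ℕ → Type) [∀ j, AddCommGroup (Hrel j)] [∀ j, Module R (Hrel j)]
    (Hlow : ℕ → Type) [∀ j, AddCommGroup (Hlow j)] [∀ j, Module R (Hlow j)]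
    (δ : ∀ j, (𝒩 j) →ₗ[R] Hrel (j + 1))
    (hexact : ∀ j (y : 𝒩 j), δ j y = 0 → ∃ x ∈ 𝒲 j, b x = (y : HN))
    (duality : ∀ j, Hrel (j + 1) ≃ₗ[R] Hlow (2 * n - j - 1))
    -- W is a Stein manifold of complex dimension n: homotopically of dimension ≤ n
    (hHlow : ∀ j, n + 1 ≤ j → Subsingleton (Hlow j))
    (hcohW : ∀ j, n + 1 ≤ j → 𝒲 j = ⊥)
    (k : ℕ) (i : Fin k → ℕ)
    (hil : ∀ l, 1 ≤ i l) (hiu : ∀ l, i l ≤ n - 2)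
    (hsum : n + 1 ≤ ∑ l, i l)
    (x : Fin k → HN) (hx : ∀ l, x l ∈ 𝒩 (i l)) :
    (List.ofFn x).prod = 0 :=
  statement2_general R n hn HW HN 𝒲 𝒩 b Hrel Hlow δ hexact duality hHlow hcohW k i hiu hsum x hx
end

section
/- Let p : N → Σ be an oriented circle bundle over a closed oriented connected manifold Σ of dimension m−2 ≥ 2, with Euler class e ∈ H²(Σ). Fix h and i₁,...,i_k ∈ {1,...,m−2−h} with i₁+⋯+i_k ≥ h+1. If the cup product map H^{i₁}(Σ) ⊗ ⋯ ⊗ H^{i_k}(Σ) → H^{i₁+⋯+i_k}(Σ) is surjective but the map (∪ e) : H^{i₁+⋯+i_k−2}(Σ) → H^{i₁+⋯+i_k}(Σ) is not surjective, then N does not bound a compact orientable manifold having the homotopy type of a CW-complex of dimension ≤ h. -/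
/-!
If `N = ∂W` with `W` of homotopical dimension `≤ h`, Poincaré–Lefschetz duality gives
`H^{j+1}(W, N) ≅ H_{m-j-1}(W) = 0` for `j ≤ m - 2 - h`, so every class of `N` in such a degree `j`
restricts from `W`. A product of such classes of total degree `≥ h + 1` is therefore the
restriction of a class of `W` in degree `≥ h + 1`, hence zero. Since the cup product of `Σ`
in degrees `i₁, …, i_k` is surjective, `p^*` then kills `H^{i₁+⋯+i_k}(Σ)`, and the Gysin
sequence makes `∪ e` surjective onto it.
-/

section Filling

variable {R HW HN : Type} [CommRing R] [Ring HW] [Ring HN] [Algebra R HW] [Algebra R HN]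
  {𝒲 : ℕ → Submodule R HW} {𝒩 : ℕ → Submodule R HN} (b : HW →ₐ[R] HN)

theorem exists_mem_graded_map_eq_of_subsingleton {Hrel : Type} [AddCommGroup Hrel]
    [Module R Hrel] [Subsingleton Hrel] {j : ℕ} (δ : 𝒩 j →ₗ[R] Hrel)
    (hexact : ∀ y : 𝒩 j, δ y = 0 → ∃ x ∈ 𝒲 j, b x = y) {y : HN} (hy : y ∈ 𝒩 j) :
    ∃ x ∈ 𝒲 j, b x = y :=
  hexact ⟨y, hy⟩ (Subsingleton.elim _ _)

/-- The cup-product vanishing theorem for the boundary of a manifold of homotopical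
dimension `≤ h`. -/
theorem list_prod_ofFn_eq_zero_of_forall_exists_map_eq [SetLike.GradedMonoid 𝒲] {h k : ℕ}
    (hcohW : ∀ j, h + 1 ≤ j → 𝒲 j = ⊥) (i : Fin k → ℕ) (hsum : h + 1 ≤ ∑ l, i l)
    (y : Fin k → HN) (hy : ∀ l, ∃ x ∈ 𝒲 (i l), b x = y l) :
    (List.ofFn y).prod = 0 := by
  choose x hx hbx using hy
  have hmem : (List.ofFn x).prod ∈ 𝒲 (∑ l, i l) := by
    simpa only [List.sum_ofFn] using SetLike.list_prod_ofFn_mem_graded i x hx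
  rw [hcohW _ hsum, Submodule.mem_bot] at hmem
  rw [← funext hbx, ← Function.comp_def, ← List.map_ofFn, ← map_list_prod, hmem, map_zero]

end Filling

theorem statement3_general
    (R : Type) [CommRing R] (m h : ℕ)
    -- cohomology of Σ and N, and the pullback p^*
    (HS HN : Type) [Ring HS] [Ring HN] [Algebra R HS] [Algebra R HN]
    (𝒮 : ℕ → Submodule R HS) (𝒩 : ℕ → Submodule R HN)
    (p : HS →ₐ[R] HN)
    (hp : ∀ j, ∀ x ∈ 𝒮 j, p x ∈ 𝒩 j)
    -- Euler class of the circle bundle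
    (e : HS)
    (k : ℕ) (i : Fin k → ℕ)
    (hil : ∀ l, 1 ≤ i l) (hiu : ∀ l, i l ≤ m - 2 - h)
    (hsum : h + 1 ≤ ∑ l, i l)
    -- Gysin exactness H^{j-2}(Σ) --∪e--> H^j(Σ) --p*--> H^j(N) in degree j = i₁+⋯+i_k
    (hgysin : ∀ z ∈ 𝒮 (∑ l, i l), p z = 0 → ∃ w ∈ 𝒮 ((∑ l, i l) - 2), w * e = z)
    -- the cup product map of Σ in multidegree (i₁,…,i_k) is surjective
    (hcupsurj : ∀ z ∈ 𝒮 (∑ l, i l),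
      ∃ x : Fin k → HS, (∀ l, x l ∈ 𝒮 (i l)) ∧ (List.ofFn x).prod = z)
    -- but cup product with e is not surjective onto H^{i₁+⋯+i_k}(Σ)
    (hnotsurj : ¬ ∀ z ∈ 𝒮 (∑ l, i l), ∃ w ∈ 𝒮 ((∑ l, i l) - 2), w * e = z)
    -- hypothetical compact orientable filling W of N, homotopically of dimension ≤ h
    (HW : Type) [Ring HW] [Algebra R HW]
    (𝒲 : ℕ → Submodule R HW) [GradedAlgebra 𝒲]
    (b : HW →ₐ[R] HN)
    (Hrel : ℕ → Type) [∀ j, AddCommGroup (Hrel j)] [∀ j, Module R (Hrel j)]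
    (Hlow : ℕ → Type) [∀ j, AddCommGroup (Hlow j)] [∀ j, Module R (Hlow j)]
    (δ : ∀ j, (𝒩 j) →ₗ[R] Hrel (j + 1))
    (hexact : ∀ j (y : 𝒩 j), δ j y = 0 → ∃ x ∈ 𝒲 j, b x = (y : HN))
    (duality : ∀ j, Hrel (j + 1) ≃ₗ[R] Hlow (m - j - 1))
    (hHlow : ∀ j, h + 1 ≤ j → Subsingleton (Hlow j))
    (hcohW : ∀ j, h + 1 ≤ j → 𝒲 j = ⊥) :
    False := by
  refine hnotsurj fun z hz => hgysin z hz ?_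
  obtain ⟨x, hx, rfl⟩ := hcupsurj z hz
  have hlift : ∀ l, ∃ w ∈ 𝒲 (i l), b w = p (x l) := fun l => by
    have : Subsingleton (Hlow (m - i l - 1)) := hHlow _ (by have := hil l; have := hiu l; omega)
    have : Subsingleton (Hrel (i l + 1)) := (duality (i l)).toEquiv.subsingleton
    exact exists_mem_graded_map_eq_of_subsingleton b (δ (i l)) (hexact (i l)) (hp _ _ (hx l))
  rw [map_list_prod, List.map_ofFn]
  exact list_prod_ofFn_eq_zero_of_forall_exists_map_eq b hcohW i hsum _ hlift

/-- Let `p : N → Σ` be an oriented circle bundle over a closed oriented connected manifold `Σ` of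
dimension `m - 2 ≥ 2`, with Euler class `e ∈ H²(Σ)`.  Fix `h` and `i₁,…,i_k ∈ {1,…,m-2-h}`
with `i₁+⋯+i_k ≥ h+1`.  Assume the cup product map
`H^{i₁}(Σ) ⊗ ⋯ ⊗ H^{i_k}(Σ) → H^{i₁+⋯+i_k}(Σ)` is surjective but cup product with `e`,
`H^{i₁+⋯+i_k-2}(Σ) → H^{i₁+⋯+i_k}(Σ)`, is not surjective.  Then `N` does not bound a compact
orientable manifold having the homotopy type of a CW-complex of dimension `≤ h`.

Encoding: `HS`, `HN` are the graded cohomology `R`-algebras of `Σ` and `N`, `p` is the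
degree-preserving pullback `p^*`, and `hgysin` is the exactness of the Gysin sequence
`H^{j-2}(Σ) --∪e--> H^{j}(Σ) --p*--> H^{j}(N)` in the relevant degree `j = i₁+⋯+i_k`.
The hypothetical bounding manifold `W` of homotopical dimension `≤ h` is encoded exactly as
in Theorem 3.1: graded cohomology algebra `𝒲`, degree-preserving restriction `b`, relative
cohomology `Hrel` with exactness, Poincaré–Lefschetz duality `H^{j+1}(W,N) ≃ H_{m-j-1}(W)`,
and vanishing of the (co)homology of `W` above degree `h`.  The conclusion is `False`:
no such bounding manifold exists. -/
theorem statement3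
    (R : Type) [CommRing R] (m h : ℕ) (hm : 2 ≤ m - 2)
    -- cohomology of Σ and N, and the pullback p^*
    (HS HN : Type) [Ring HS] [Ring HN] [Algebra R HS] [Algebra R HN]
    (𝒮 : ℕ → Submodule R HS) (𝒩 : ℕ → Submodule R HN)
    [GradedAlgebra 𝒮] [GradedAlgebra 𝒩]
    (p : HS →ₐ[R] HN)
    (hp : ∀ j, ∀ x ∈ 𝒮 j, p x ∈ 𝒩 j)
    -- Euler class of the circle bundle
    (e : HS) (he : e ∈ 𝒮 2)
    (k : ℕ) (i : Fin k → ℕ)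
    (hil : ∀ l, 1 ≤ i l) (hiu : ∀ l, i l ≤ m - 2 - h)
    (hsum : h + 1 ≤ ∑ l, i l)
    -- Gysin exactness H^{j-2}(Σ) --∪e--> H^j(Σ) --p*--> H^j(N) in degree j = i₁+⋯+i_k
    (hgysin : ∀ z ∈ 𝒮 (∑ l, i l), p z = 0 → ∃ w ∈ 𝒮 ((∑ l, i l) - 2), w * e = z)
    -- the cup product map of Σ in multidegree (i₁,…,i_k) is surjective
    (hcupsurj : ∀ z ∈ 𝒮 (∑ l, i l),
      ∃ x : Fin k → HS, (∀ l, x l ∈ 𝒮 (i l)) ∧ (List.ofFn x).prod = z)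
    -- but cup product with e is not surjective onto H^{i₁+⋯+i_k}(Σ)
    (hnotsurj : ¬ ∀ z ∈ 𝒮 (∑ l, i l), ∃ w ∈ 𝒮 ((∑ l, i l) - 2), w * e = z)
    -- hypothetical compact orientable filling W of N, homotopically of dimension ≤ h
    (HW : Type) [Ring HW] [Algebra R HW]
    (𝒲 : ℕ → Submodule R HW) [GradedAlgebra 𝒲]
    (b : HW →ₐ[R] HN)
    (hb : ∀ j, ∀ x ∈ 𝒲 j, b x ∈ 𝒩 j)
    (Hrel : ℕ → Type) [∀ j, AddCommGroup (Hrel j)] [∀ j, Module R (Hrel j)]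
    (Hlow : ℕ → Type) [∀ j, AddCommGroup (Hlow j)] [∀ j, Module R (Hlow j)]
    (δ : ∀ j, (𝒩 j) →ₗ[R] Hrel (j + 1))
    (hexact : ∀ j (y : 𝒩 j), δ j y = 0 → ∃ x ∈ 𝒲 j, b x = (y : HN))
    (duality : ∀ j, Hrel (j + 1) ≃ₗ[R] Hlow (m - j - 1))
    (hHlow : ∀ j, h + 1 ≤ j → Subsingleton (Hlow j))
    (hcohW : ∀ j, h + 1 ≤ j → 𝒲 j = ⊥) :
    False :=
  statement3_general R m h HS HN 𝒮 𝒩 p hp e k i hil hiu hsum hgysin hcupsurj hnotsurj HW 𝒲 b Hrel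
    Hlow δ hexact duality hHlow hcohW
end

section
/- Let W be a compact oriented manifold of even dimension 2n with boundary N, and suppose the restriction maps H^i(W;ℚ) → H^i(N;ℚ) are surjective for all i ≤ n−1 and vanish identically for all i with n ≤ i ≤ 2n−1. If i₁,...,i_k ∈ {1,...,n−1} satisfy i₁+⋯+i_k ≥ n, then the cup product map H^{i₁}(N;ℚ) ⊗ ⋯ ⊗ H^{i_k}(N;ℚ) → H^{i₁+⋯+i_k}(N;ℚ) vanishes identically. -/
/-!
Write `m = i₁ + ⋯ + i_k`. If `m ≥ 2n` the product lies in `H^m(N) = 0`. Otherwise each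
factor lifts to `H^{i_l}(W)` by surjectivity, the product of the lifts lies in `H^m(W)` with
`n ≤ m ≤ 2n - 1`, and the restriction, being multiplicative, sends it to the original product
while vanishing in that degree.
-/

namespace SetLike

variable {ι R S : Type*} [AddCommMonoid ι] [Monoid R] [SetLike S R] (A : ι → S)
  [GradedMonoid A]

theorem list_prod_ofFn_mem_graded_sum {k : ℕ} (i : Fin k → ι) (x : Fin k → R)
    (hx : ∀ l, x l ∈ A (i l)) : (List.ofFn x).prod ∈ A (∑ l, i l) := by
  simpa only [List.sum_ofFn] using list_prod_ofFn_mem_graded i x hx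

end SetLike

section GradedProduct

variable {ι : Type*} [AddCommMonoid ι] {k : ℕ} (i : Fin k → ι)

theorem list_prod_ofFn_eq_zero_of_graded_eq_bot {K R : Type*} [Semiring K] [Semiring R]
    [Module K R] (𝒜 : ι → Submodule K R) [SetLike.GradedMonoid 𝒜] (hbot : 𝒜 (∑ l, i l) = ⊥)
    (x : Fin k → R) (hx : ∀ l, x l ∈ 𝒜 (i l)) : (List.ofFn x).prod = 0 := by
  simpa [hbot] using SetLike.list_prod_ofFn_mem_graded_sum 𝒜 i x hx

theorem list_prod_ofFn_eq_zero_of_lifts {R S σ : Type*} [Semiring R] [Semiring S] [SetLike σ R]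
    (𝒜 : ι → σ) [SetLike.GradedMonoid 𝒜] (f : R →+* S) (hf : ∀ y ∈ 𝒜 (∑ l, i l), f y = 0)
    (x : Fin k → S) (hlift : ∀ l, ∃ y ∈ 𝒜 (i l), f y = x l) : (List.ofFn x).prod = 0 := by
  choose y hy hfy using hlift
  have hprod : f (List.ofFn y).prod = (List.ofFn x).prod := by
    rw [map_list_prod, List.map_ofFn]
    exact congrArg _ (List.ofFn_inj.mpr (funext hfy))
  rw [← hprod]
  exact hf _ (SetLike.list_prod_ofFn_mem_graded_sum 𝒜 i y hy)

end GradedProduct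

theorem statement8_general
    (n : ℕ)
    (HW HN : Type) [Ring HW] [Ring HN] [Algebra ℚ HW] [Algebra ℚ HN]
    (𝒲 : ℕ → Submodule ℚ HW) (𝒩 : ℕ → Submodule ℚ HN)
    [GradedAlgebra 𝒲] [GradedAlgebra 𝒩]
    (b : HW →ₐ[ℚ] HN)
    (hsurj : ∀ j, j ≤ n - 1 → ∀ y ∈ 𝒩 j, ∃ x ∈ 𝒲 j, b x = y)
    (hvan : ∀ j, n ≤ j → j ≤ 2 * n - 1 → ∀ x ∈ 𝒲 j, b x = 0)
    -- N is a closed (2n-1)-manifold, so its cohomology vanishes above degree 2n-1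
    (hNtop : ∀ j, 2 * n ≤ j → 𝒩 j = ⊥)
    (k : ℕ) (i : Fin k → ℕ)
    (hiu : ∀ l, i l ≤ n - 1)
    (hsum : n ≤ ∑ l, i l)
    (x : Fin k → HN) (hx : ∀ l, x l ∈ 𝒩 (i l)) :
    (List.ofFn x).prod = 0 := by
  by_cases htop : 2 * n ≤ ∑ l, i l
  · exact list_prod_ofFn_eq_zero_of_graded_eq_bot i 𝒩 (hNtop _ htop) x hx
  · exact list_prod_ofFn_eq_zero_of_lifts i 𝒲 b.toRingHom
      (hvan _ hsum (by omega)) x fun l => hsurj (i l) (hiu l) (x l) (hx l)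

/-- key step of the Durfee–Hain theorem.
Let `W` be a compact oriented `2n`-manifold with boundary `N`.  Rational coefficients
throughout: the cohomology rings `H^*(W;ℚ)`, `H^*(N;ℚ)` are encoded as graded `ℚ`-algebras
and the restriction map as a degree-preserving algebra homomorphism `b`.  Assume the
Goresky–MacPherson property: `b` is surjective in every degree `i ≤ n-1` and vanishes
identically in every degree `i` with `n ≤ i ≤ 2n-1` (moreover `H^j(N;ℚ) = 0` for
`j ≥ 2n`, since `N` is a closed `(2n-1)`-manifold).  If `i₁,…,i_k ∈ {1,…,n-1}` satisfy
`i₁+⋯+i_k ≥ n`, then the cup product map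
`H^{i₁}(N;ℚ) ⊗ ⋯ ⊗ H^{i_k}(N;ℚ) → H^{i₁+⋯+i_k}(N;ℚ)` vanishes identically. -/
theorem statement8
    (n : ℕ) (hn : 1 ≤ n)
    (HW HN : Type) [Ring HW] [Ring HN] [Algebra ℚ HW] [Algebra ℚ HN]
    (𝒲 : ℕ → Submodule ℚ HW) (𝒩 : ℕ → Submodule ℚ HN)
    [GradedAlgebra 𝒲] [GradedAlgebra 𝒩]
    (b : HW →ₐ[ℚ] HN)
    (hb : ∀ j, ∀ x ∈ 𝒲 j, b x ∈ 𝒩 j)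
    (hsurj : ∀ j, j ≤ n - 1 → ∀ y ∈ 𝒩 j, ∃ x ∈ 𝒲 j, b x = y)
    (hvan : ∀ j, n ≤ j → j ≤ 2 * n - 1 → ∀ x ∈ 𝒲 j, b x = 0)
    -- N is a closed (2n-1)-manifold, so its cohomology vanishes above degree 2n-1
    (hNtop : ∀ j, 2 * n ≤ j → 𝒩 j = ⊥)
    (k : ℕ) (i : Fin k → ℕ)
    (hil : ∀ l, 1 ≤ i l) (hiu : ∀ l, i l ≤ n - 1)
    (hsum : n ≤ ∑ l, i l)
    (x : Fin k → HN) (hx : ∀ l, x l ∈ 𝒩 (i l)) :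
    (List.ofFn x).prod = 0 :=
  statement8_general n HW HN 𝒲 𝒩 b hsurj hvan hNtop k i hiu hsum x hx
end

section
/- For n ≥ 2, the (2n−1)-torus T^{2n−1} is not Milnor fillable: there is no compact oriented 2n-manifold W with boundary T^{2n−1} such that the restriction maps H^i(W;ℚ) → H^i(T^{2n−1};ℚ) are surjective for i ≤ n−1 and vanish for n ≤ i ≤ 2n−1. -/
/-!
A filling would lift each generator of `H¹(T^{2n-1}) = V` to degree one of `H^*(W)`, hence,
multiplicatively, every `n`-fold wedge `v₁ ∧ ⋯ ∧ vₙ` to degree `n`. Since `dim V = 2n - 1 ≥ n`,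
some such wedge (of linearly independent vectors) is nonzero, yet the restriction vanishes in
degree `n`.
-/

theorem ExteriorAlgebra.ιMulti_ne_zero_of_linearIndependent {K E : Type*} [Field K]
    [AddCommGroup E] [Module K E] {n : ℕ} {v : Fin n → E} (hv : LinearIndependent K v) :
    ιMulti K n v ≠ 0 := by
  -- `ιMulti K n v` is the member of `ιMulti_family K n v` indexed by all of `Fin n`.
  have := (exteriorPower.ιMulti_family_linearIndependent_field (n := n) hv).ne_zero
    (Set.powersetCard.ofFinEmbEquiv (OrderIso.refl _).toOrderEmbedding)
  simpa [exteriorPower.ιMulti_family, ← exteriorPower.ιMulti_apply_coe] using this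

theorem ExteriorAlgebra.exists_mem_graded_map_eq_ιMulti {R M A : Type*} [CommRing R]
    [AddCommGroup M] [Module R M] [Semiring A] [Algebra R A]
    (𝒜 : ℕ → Submodule R A) [SetLike.GradedMonoid 𝒜] (b : A →ₐ[R] ExteriorAlgebra R M)
    (hb : ∀ m, ∃ x ∈ 𝒜 1, b x = ι R m) (n : ℕ) (v : Fin n → M) :
    ∃ x ∈ 𝒜 n, b x = ιMulti R n v := by
  choose x hx hbx using fun i => hb (v i)
  refine ⟨(List.ofFn x).prod, ?_, ?_⟩
  · simpa using SetLike.list_prod_ofFn_mem_graded (A := 𝒜) (fun _ => 1) x hx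
  · rw [ιMulti_apply, map_list_prod, List.map_ofFn]
    exact congrArg _ (congrArg _ (funext hbx))

theorem statement10_general
    (n : ℕ) (hn : 2 ≤ n)
    (V : Type) [AddCommGroup V] [Module ℚ V]
    (hV : Module.finrank ℚ V = 2 * n - 1)
    (HW : Type) [Ring HW] [Algebra ℚ HW]
    (𝒲 : ℕ → Submodule ℚ HW) [GradedAlgebra 𝒲]
    (b : HW →ₐ[ℚ] ExteriorAlgebra ℚ V)
    (hsurj : ∀ j, j ≤ n - 1 →
      ∀ y ∈ (⋀[ℚ]^j V : Submodule ℚ (ExteriorAlgebra ℚ V)), ∃ x ∈ 𝒲 j, b x = y)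
    (hvan : ∀ j, n ≤ j → j ≤ 2 * n - 1 → ∀ x ∈ 𝒲 j, b x = 0) :
    False := by
  have hι : ∀ m, ∃ x ∈ 𝒲 1, b x = ExteriorAlgebra.ι ℚ m := fun m =>
    hsurj 1 (by omega) _ (by simp [ExteriorAlgebra.exteriorPower])
  obtain ⟨v, hv⟩ := exists_linearIndependent_of_le_finrank (R := ℚ) (M := V) (n := n) (by omega)
  obtain ⟨x, hx, hbx⟩ := ExteriorAlgebra.exists_mem_graded_map_eq_ιMulti 𝒲 b hι n v
  exact ExteriorAlgebra.ιMulti_ne_zero_of_linearIndependent hv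
    (hbx ▸ hvan n le_rfl (by omega) x hx)

/-- For `n ≥ 2`, the `(2n-1)`-torus `T^{2n-1}` is not Milnor fillable: there is no compact
oriented `2n`-manifold `W` with boundary `T^{2n-1}` such that the restriction maps
`H^i(W;ℚ) → H^i(T^{2n-1};ℚ)` are surjective for `i ≤ n-1` and vanish for `n ≤ i ≤ 2n-1`.
The rational cohomology ring of `T^{2n-1}` is the exterior algebra `Λ*(V)` on
`V = H¹(T^{2n-1};ℚ) ≅ ℚ^{2n-1}`, with degree-`j` part `⋀[ℚ]^j V`; a hypothetical filling
is encoded by a graded `ℚ`-algebra `HW` and a degree-preserving algebra homomorphism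
`b : H^*(W;ℚ) → Λ*(V)` with the stated surjectivity and vanishing.  Conclusion: `False`. -/
theorem statement10
    (n : ℕ) (hn : 2 ≤ n)
    (V : Type) [AddCommGroup V] [Module ℚ V] [FiniteDimensional ℚ V]
    (hV : Module.finrank ℚ V = 2 * n - 1)
    (HW : Type) [Ring HW] [Algebra ℚ HW]
    (𝒲 : ℕ → Submodule ℚ HW) [GradedAlgebra 𝒲]
    (b : HW →ₐ[ℚ] ExteriorAlgebra ℚ V)
    (hb : ∀ j, ∀ x ∈ 𝒲 j, b x ∈ (⋀[ℚ]^j V : Submodule ℚ (ExteriorAlgebra ℚ V)))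
    (hsurj : ∀ j, j ≤ n - 1 →
      ∀ y ∈ (⋀[ℚ]^j V : Submodule ℚ (ExteriorAlgebra ℚ V)), ∃ x ∈ 𝒲 j, b x = y)
    (hvan : ∀ j, n ≤ j → j ≤ 2 * n - 1 → ∀ x ∈ 𝒲 j, b x = 0) :
    False :=
  statement10_general n hn V hV HW 𝒲 b hsurj hvan
end

section
/- Let (X,x) be a normal isolated singularity of complex dimension n with link N. Suppose there exist i₁,...,i_k ∈ {1,...,2n−2−h} with i₁+⋯+i_k ≥ h+1 such that the cup product map H^{i₁}(N;R) ⊗ ⋯ ⊗ H^{i_k}(N;R) → H^{i₁+⋯+i_k}(N;R) does not vanish identically (for some coefficient ring R). Then the exceptional set of any resolution of (X,x) has complex dimension at least (h+1)/2. -/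
/-!
If `2d ≤ h`, then for every degree `j ∈ [1, 2n-2-h]` the relative group `H^{j+1}(W,N)` is dual to
`H_{2n-j-1}(W)`, which vanishes since `2n-j-1 > 2d`; by exactness the restriction
`H^j(W) → H^j(N)` is onto. So each factor of the cup product lifts to `W`, and the product of
the lifts lies in `H^{i₁+⋯+i_k}(W) = 0` because `i₁+⋯+i_k > h ≥ 2d`.
-/

theorem SetLike.list_prod_ofFn_eq_zero_of_eq_bot {ι R A : Type*} [AddMonoid ι] [CommSemiring R]
    [Semiring A] [Algebra R A] {𝒜 : ι → Submodule R A} [SetLike.GradedMonoid 𝒜] {k : ℕ}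
    (i : Fin k → ι) (w : Fin k → A) (hw : ∀ l, w l ∈ 𝒜 (i l))
    (hbot : 𝒜 (List.ofFn i).sum = ⊥) : (List.ofFn w).prod = 0 := by
  simpa [hbot] using SetLike.list_prod_ofFn_mem_graded i w hw

theorem list_prod_ofFn_map_eq_zero_of_eq_bot {ι R A B : Type*} [AddMonoid ι] [CommSemiring R]
    [Semiring A] [Algebra R A] [Semiring B] [Algebra R B] {𝒜 : ι → Submodule R A}
    [SetLike.GradedMonoid 𝒜] (f : A →ₐ[R] B) {k : ℕ} (i : Fin k → ι) (x : Fin k → B)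
    (hx : ∀ l, ∃ w ∈ 𝒜 (i l), f w = x l) (hbot : 𝒜 (List.ofFn i).sum = ⊥) :
    (List.ofFn x).prod = 0 := by
  choose w hw hfw using hx
  have hx_eq : List.ofFn x = (List.ofFn w).map f := by
    simp only [List.map_ofFn, Function.comp_def, hfw]
  rw [hx_eq, ← map_list_prod, SetLike.list_prod_ofFn_eq_zero_of_eq_bot i w hw hbot, map_zero]

theorem statement15_general
    (R : Type) [CommRing R] (n h d : ℕ)
    (HW HN : Type) [Ring HW] [Ring HN] [Algebra R HW] [Algebra R HN]
    (𝒲 : ℕ → Submodule R HW) (𝒩 : ℕ → Submodule R HN)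
    [GradedAlgebra 𝒲] [GradedAlgebra 𝒩]
    (b : HW →ₐ[R] HN)
    (Hrel : ℕ → Type) [∀ j, AddCommGroup (Hrel j)] [∀ j, Module R (Hrel j)]
    (Hlow : ℕ → Type) [∀ j, AddCommGroup (Hlow j)] [∀ j, Module R (Hlow j)]
    (δ : ∀ j, (𝒩 j) →ₗ[R] Hrel (j + 1))
    (hexact : ∀ j (y : 𝒩 j), δ j y = 0 → ∃ x ∈ 𝒲 j, b x = (y : HN))
    (duality : ∀ j, Hrel (j + 1) ≃ₗ[R] Hlow (2 * n - j - 1))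
    -- W retracts onto the exceptional set E of complex dimension d:
    -- W is homotopically of dimension ≤ 2d
    (hHlow : ∀ j, 2 * d + 1 ≤ j → Subsingleton (Hlow j))
    (hcohW : ∀ j, 2 * d + 1 ≤ j → 𝒲 j = ⊥)
    -- a non-vanishing cup product on the link N
    (k : ℕ) (i : Fin k → ℕ)
    (hil : ∀ l, 1 ≤ i l) (hiu : ∀ l, i l ≤ 2 * n - 2 - h)
    (hsum : h + 1 ≤ ∑ l, i l)
    (x : Fin k → HN) (hx : ∀ l, x l ∈ 𝒩 (i l))
    (hprod : (List.ofFn x).prod ≠ 0) :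
    h + 1 ≤ 2 * d := by
  by_contra! hd
  have hlift : ∀ l, ∃ w ∈ 𝒲 (i l), b w = x l := by
    intro l
    have : Subsingleton (Hlow (2 * n - i l - 1)) := hHlow _ (by grind)
    have : Subsingleton (Hrel (i l + 1)) := (duality (i l)).toEquiv.subsingleton
    exact hexact (i l) ⟨x l, hx l⟩ (Subsingleton.elim _ _)
  have hbot : 𝒲 (List.ofFn i).sum = ⊥ := hcohW _ (by rw [List.sum_ofFn]; omega)
  exact hprod (list_prod_ofFn_map_eq_zero_of_eq_bot b i x hlift hbot)

/-- Proposition 4.1, `dimex`.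
Let `(X,x)` be a normal isolated singularity of complex dimension `n` with link `N`.
Following the context, a resolution of `(X,x)` is encoded by its total space `W` over a
Milnor representative: a compact oriented `2n`-manifold with boundary `N` which deformation
retracts onto the exceptional set `E` of complex dimension `d`, hence has the homotopy type
of a CW-complex of dimension `2d`.  As in Theorem 3.1, this is encoded via the graded
cohomology `R`-algebras of `W` and `N`, the degree-preserving restriction `b`, relative
cohomology `Hrel j = H^j(W,N;R)` with exactness of `H^j(W) → H^j(N) → H^{j+1}(W,N)`,
Poincaré–Lefschetz duality `H^{j+1}(W,N;R) ≃ H_{2n-j-1}(W;R)`, and vanishing of the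
(co)homology of `W` above degree `2d`.  Suppose there exist `i₁,…,i_k ∈ {1,…,2n-2-h}`
with `i₁+⋯+i_k ≥ h+1` such that the cup product map
`H^{i₁}(N;R) ⊗ ⋯ ⊗ H^{i_k}(N;R) → H^{i₁+⋯+i_k}(N;R)` does not vanish identically.
Then `2d ≥ h+1`, i.e. the exceptional set has complex dimension at least `(h+1)/2`. -/
theorem statement15
    (R : Type) [CommRing R] (n h d : ℕ) (hn : 1 ≤ n)
    (HW HN : Type) [Ring HW] [Ring HN] [Algebra R HW] [Algebra R HN]
    (𝒲 : ℕ → Submodule R HW) (𝒩 : ℕ → Submodule R HN)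
    [GradedAlgebra 𝒲] [GradedAlgebra 𝒩]
    (b : HW →ₐ[R] HN)
    (hb : ∀ j, ∀ x ∈ 𝒲 j, b x ∈ 𝒩 j)
    (Hrel : ℕ → Type) [∀ j, AddCommGroup (Hrel j)] [∀ j, Module R (Hrel j)]
    (Hlow : ℕ → Type) [∀ j, AddCommGroup (Hlow j)] [∀ j, Module R (Hlow j)]
    (δ : ∀ j, (𝒩 j) →ₗ[R] Hrel (j + 1))
    (hexact : ∀ j (y : 𝒩 j), δ j y = 0 → ∃ x ∈ 𝒲 j, b x = (y : HN))
    (duality : ∀ j, Hrel (j + 1) ≃ₗ[R] Hlow (2 * n - j - 1))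
    -- W retracts onto the exceptional set E of complex dimension d:
    -- W is homotopically of dimension ≤ 2d
    (hHlow : ∀ j, 2 * d + 1 ≤ j → Subsingleton (Hlow j))
    (hcohW : ∀ j, 2 * d + 1 ≤ j → 𝒲 j = ⊥)
    -- a non-vanishing cup product on the link N
    (k : ℕ) (i : Fin k → ℕ)
    (hil : ∀ l, 1 ≤ i l) (hiu : ∀ l, i l ≤ 2 * n - 2 - h)
    (hsum : h + 1 ≤ ∑ l, i l)
    (x : Fin k → HN) (hx : ∀ l, x l ∈ 𝒩 (i l))
    (hprod : (List.ofFn x).prod ≠ 0) :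
    h + 1 ≤ 2 * d :=
  statement15_general R n h d HW HN 𝒲 𝒩 b Hrel Hlow δ hexact duality hHlow hcohW k i hil hiu hsum x
    hx hprod
end
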